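/- Let u : ℝ² → ℝ² be continuous on the closed unit disk D̄, continuously differentiable on D̄ \ {0}, and circularly symmetric, i.e. u(R_θ x) = R_θ u(x) for every rotation R_θ of ℝ² and every x ∈ D̄. If moreover div u = 0 on D \ {0}, then there is a function s : (0,1] → ℝ such that u(x) = s(‖x‖)·x^⊥ for all x ∈ D̄ \ {0}, and u(0) = 0. -/

import Mathlib

open Metric Set MeasureTheory Filter Real
open scoped RealInnerProductSpace MeasureTheory

noncomputable section

/-- The plane `ℝ²`, as a Euclidean space. -/
abbrev E2 := EuclideanSpace ℝ (Fin 2)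

/-- Counterclockwise rotation of `x` by `90°`:  `x^⊥ = (-x₂, x₁)`. -/
def perp (x : E2) : E2 := !₂[-(x 1), x 0]

/-- Counterclockwise rotation of the plane by the angle `θ`. -/
def rot2 (θ : ℝ) (x : E2) : E2 :=
  !₂[Real.cos θ * x 0 - Real.sin θ * x 1, Real.sin θ * x 0 + Real.cos θ * x 1]

/-!
Rotating the point `‖x‖ • e₀` of the positive first axis onto `x` reduces everything to the
ray `t ↦ t • e₀`. Differentiating the symmetry in `θ` gives `Du(x) x^⊥ = (u x)^⊥`, which on the
ray reads `ρ ∂₂u₂ = u₁`; together with `∂₁u₁ + ∂₂u₂ = 0` this gives `ρ ↦ ρ u₁(ρ e₀)` zero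
derivative on `(0, 1)`. It is continuous on `[0, 1]` and vanishes at `0`, so the radial component
`u₁` vanishes on the ray, and rotating back shows that `u x` is a multiple of `x^⊥`. Finally
`u 0 = u (R_π 0) = -u 0`.
-/

local notation "e₀" => (EuclideanSpace.single (0 : Fin 2) (1 : ℝ) : E2)
local notation "e₁" => (EuclideanSpace.single (1 : Fin 2) (1 : ℝ) : E2)

lemma rot2_zero (x : E2) : rot2 0 x = x := by
  ext i; fin_cases i <;> simp [rot2]

lemma rot2_pi (x : E2) : rot2 π x = -x := by
  ext i; fin_cases i <;> simp [rot2]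

lemma rot2_smul (θ c : ℝ) (x : E2) : rot2 θ (c • x) = c • rot2 θ x := by
  ext i; fin_cases i <;> simp [rot2] <;> ring

lemma rot2_perp (θ : ℝ) (x : E2) : rot2 θ (perp x) = perp (rot2 θ x) := by
  ext i; fin_cases i <;> simp [rot2, perp] <;> ring

lemma rot2_eq_cos_smul_add_sin_smul_perp (θ : ℝ) (x : E2) :
    rot2 θ x = Real.cos θ • x + Real.sin θ • perp x := by
  ext i; fin_cases i <;> simp [rot2, perp] <;> ring

lemma perp_apply_one (x : E2) : perp x 1 = x 0 := by
  simp [perp]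

lemma perp_smul_single_zero (r : ℝ) : perp (r • e₀) = r • e₁ := by
  ext i; fin_cases i <;> simp [perp]

lemma hasDerivAt_rot2 (θ : ℝ) (x : E2) :
    HasDerivAt (fun φ => rot2 φ x) (perp (rot2 θ x)) θ := by
  simp_rw [rot2_eq_cos_smul_add_sin_smul_perp]
  refine (((hasDerivAt_cos θ).smul_const x).add
    ((hasDerivAt_sin θ).smul_const (perp x))).congr_deriv ?_
  ext i; fin_cases i <;> simp [perp]; ring

lemma exists_rot2_norm_smul_single_eq (x : E2) : ∃ θ, rot2 θ (‖x‖ • e₀) = x := by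
  rcases eq_or_ne x 0 with rfl | hx
  · exact ⟨0, by simp [rot2_zero]⟩
  set z : ℂ := ⟨x 0, x 1⟩
  have hz : z ≠ 0 := fun h => hx <| by
    ext i; fin_cases i
    exacts [congrArg Complex.re h, congrArg Complex.im h]
  have hnorm : ‖z‖ = ‖x‖ := by
    rw [Complex.norm_def, Complex.normSq_apply, EuclideanSpace.norm_eq, Fin.sum_univ_two]
    simp [z, sq]
  refine ⟨z.arg, ?_⟩
  have hx' : ‖x‖ ≠ 0 := norm_ne_zero_iff.mpr hx
  ext i; fin_cases i
  · simp [z, rot2, Complex.cos_arg hz, hnorm]; field_simp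
  · simp [z, rot2, Complex.sin_arg, hnorm]; field_simp

lemma eq_smul_perp_smul_single_zero {v : E2} (hv : v 0 = 0) {r : ℝ} (hr : r ≠ 0) :
    v = (v 1 / r) • perp (r • e₀) := by
  ext i; fin_cases i <;> simp [perp, hv, hr]

lemma fderiv_apply_perp_of_rot2 {u : E2 → E2} {x : E2} (hu : DifferentiableAt ℝ u x)
    (hsym : ∀ θ, u (rot2 θ x) = rot2 θ (u x)) : fderiv ℝ u x (perp x) = perp (u x) := by
  have hleft : HasDerivAt (fun θ => u (rot2 θ x)) (fderiv ℝ u x (perp x)) 0 := by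
    have hrot := hasDerivAt_rot2 0 x
    rw [rot2_zero] at hrot
    exact hu.hasFDerivAt.comp_hasDerivAt_of_eq 0 hrot (rot2_zero x).symm
  have hright := hasDerivAt_rot2 0 (u x)
  rw [rot2_zero] at hright
  exact hleft.unique (by simpa only [hsym] using hright)

lemma hasDerivAt_mul_apply_smul_single_zero {u : E2 → E2} {ρ : ℝ}
    (hu : DifferentiableAt ℝ u (ρ • e₀))
    (hsym : ∀ θ, u (rot2 θ (ρ • e₀)) = rot2 θ (u (ρ • e₀)))
    (hdiv : fderiv ℝ u (ρ • e₀) e₀ 0 + fderiv ℝ u (ρ • e₀) e₁ 1 = 0) :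
    HasDerivAt (fun t => t * u (t • e₀) 0) 0 ρ := by
  have hrot := congrArg (· 1) (fderiv_apply_perp_of_rot2 hu hsym)
  simp only [perp_smul_single_zero, map_smul] at hrot
  have hray : HasDerivAt (fun t => u (t • e₀) 0) (fderiv ℝ u (ρ • e₀) e₀ 0) ρ := by
    have hline : HasDerivAt (fun t : ℝ => t • e₀) e₀ ρ := by
      simpa using (hasDerivAt_id ρ).smul_const e₀
    exact (EuclideanSpace.proj (0 : Fin 2)).hasFDerivAt.comp_hasDerivAt ρ
      (hu.hasFDerivAt.comp_hasDerivAt ρ hline)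
  refine ((hasDerivAt_id' ρ).mul hray).congr_deriv ?_
  simp only [perp_apply_one, PiLp.smul_apply, smul_eq_mul] at hrot
  linear_combination ρ * hdiv - hrot

lemma eq_zero_of_hasDerivAt_mul_eq_zero {f : ℝ → ℝ} {b : ℝ} (hb : 0 < b)
    (hf : ContinuousOn f (Icc 0 b)) (hderiv : ∀ t ∈ Ioo 0 b, HasDerivAt (fun t => t * f t) 0 t) :
    f b = 0 := by
  obtain ⟨c, -, hc⟩ := exists_hasDerivAt_eq_slope (fun t => t * f t) 0 hb
    (continuousOn_id.mul hf) hderiv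
  simp only [Pi.zero_apply, zero_mul, sub_zero] at hc
  have := (div_eq_zero_iff.mp hc.symm).resolve_right hb.ne'
  exact (mul_eq_zero.mp this).resolve_left hb.ne'

lemma apply_smul_single_zero_zero_eq_zero {u : E2 → E2}
    (hcont : ContinuousOn u (closedBall 0 1)) (hC1 : ContDiffOn ℝ 1 u (closedBall 0 1 \ {0}))
    (hsym : ∀ θ : ℝ, ∀ x ∈ closedBall (0 : E2) 1, u (rot2 θ x) = rot2 θ (u x))
    (hdiv : ∀ x ∈ ball (0 : E2) 1 \ {0}, fderiv ℝ u x e₀ 0 + fderiv ℝ u x e₁ 1 = 0)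
    {r : ℝ} (hr : 0 < r) (hr1 : r ≤ 1) : u (r • e₀) 0 = 0 := by
  have hray_mem : ∀ t ∈ Icc (0 : ℝ) 1, t • e₀ ∈ closedBall (0 : E2) 1 := fun t ht => by
    simpa [norm_smul, abs_of_nonneg ht.1] using ht.2
  have hray_cont : ContinuousOn (fun t : ℝ => u (t • e₀) 0) (Icc 0 1) :=
    (EuclideanSpace.proj (0 : Fin 2)).continuous.comp_continuousOn
      (hcont.comp (by fun_prop) hray_mem)
  have hray_deriv : ∀ ρ ∈ Ioo (0 : ℝ) 1, HasDerivAt (fun t => t * u (t • e₀) 0) 0 ρ := by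
    intro ρ hρ
    have hmem : ρ • e₀ ∈ ball (0 : E2) 1 \ {0} := by
      simp [norm_smul, abs_of_pos hρ.1, hρ.1.ne', hρ.2]
    have hnhds : closedBall (0 : E2) 1 \ {0} ∈ nhds (ρ • e₀) :=
      mem_of_superset ((isOpen_ball.sdiff isClosed_singleton).mem_nhds hmem)
        (sdiff_subset_sdiff_left ball_subset_closedBall)
    exact hasDerivAt_mul_apply_smul_single_zero
      ((hC1.contDiffAt hnhds).differentiableAt one_ne_zero)
      (fun θ => hsym θ _ (ball_subset_closedBall hmem.1)) (hdiv _ hmem)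
  exact eq_zero_of_hasDerivAt_mul_eq_zero hr (hray_cont.mono (Icc_subset_Icc_right hr1))
    fun t ht => hray_deriv t ⟨ht.1, ht.2.trans_le hr1⟩

/-- If `u` is continuous on the closed unit disk, continuously differentiable on
`D̄ \ {0}`, circularly symmetric, and divergence free on `D \ {0}`, then
`u x = s(‖x‖) • x^⊥` on `D̄ \ {0}` for some `s : (0,1] → ℝ`, and `u 0 = 0`. -/
theorem stmt0 (u : E2 → E2)
    (hcont : ContinuousOn u (closedBall 0 1))
    (hC1 : ContDiffOn ℝ 1 u (closedBall 0 1 \ {0}))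
    (hsym : ∀ θ : ℝ, ∀ x ∈ closedBall (0:E2) 1, u (rot2 θ x) = rot2 θ (u x))
    (hdiv : ∀ x ∈ ball (0:E2) 1 \ {0},
      fderiv ℝ u x (EuclideanSpace.single 0 1) 0
        + fderiv ℝ u x (EuclideanSpace.single 1 1) 1 = 0) :
    (∃ s : ℝ → ℝ, ∀ x ∈ closedBall (0:E2) 1 \ {0}, u x = s ‖x‖ • perp x) ∧ u 0 = 0 := by
  have hu0 : u 0 = 0 := by
    have h := hsym π 0 (by simp)
    rwa [rot2_pi, rot2_pi, neg_zero, eq_neg_iff_add_eq_zero, ← two_smul ℝ,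
      smul_eq_zero_iff_right two_ne_zero] at h
  refine ⟨⟨fun r => u (r • e₀) 1 / r, fun x ⟨hx, hx0⟩ => ?_⟩, hu0⟩
  have hr : 0 < ‖x‖ := norm_pos_iff.mpr hx0
  have hr1 : ‖x‖ ≤ 1 := mem_closedBall_zero_iff.mp hx
  have hradial : u (‖x‖ • e₀) 0 = 0 :=
    apply_smul_single_zero_zero_eq_zero hcont hC1 hsym hdiv hr hr1
  obtain ⟨θ, hθ⟩ := exists_rot2_norm_smul_single_eq x
  calc u x = rot2 θ (u (‖x‖ • e₀)) := by
        rw [← hsym θ _ (by simpa [norm_smul] using hr1), hθ]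
    _ = rot2 θ ((u (‖x‖ • e₀) 1 / ‖x‖) • perp (‖x‖ • e₀)) :=
      congrArg _ (eq_smul_perp_smul_single_zero hradial hr.ne')
    _ = (u (‖x‖ • e₀) 1 / ‖x‖) • perp x := by rw [rot2_smul, rot2_perp, hθ]
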